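/- arXiv:1201.3441 — 2 statements merged into one kernel-verified Lean document; each statement's English description precedes it below -/
import Mathlib

section
/- Let 𝔐 be a graph-determined variety of rings. Then for every prime p and every integer n ≥ 2, the ring N_{0,p^n} does not belong to 𝔐. -/
/-- An element of a ring is a (one-sided or two-sided) zero-divisor: it is nonzero and
kills some nonzero element on the left or on the right. -/
def IsZD {R : Type*} [NonUnitalNonAssocRing R] (x : R) : Prop :=
  x ≠ 0 ∧ ∃ y : R, y ≠ 0 ∧ (x * y = 0 ∨ y * x = 0)

/-- The zero-divisor graph `Γ(R)` of a ring `R`: vertices are the nonzero zero-divisors,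
and distinct vertices `x`, `y` are adjacent iff `x*y = 0` or `y*x = 0`. -/
def zdvGraph (R : Type*) [NonUnitalNonAssocRing R] :
    SimpleGraph {x : R // IsZD x} where
  Adj a b := a ≠ b ∧ ((a : R) * (b : R) = 0 ∨ (b : R) * (a : R) = 0)
  symm := by
    constructor
    rintro a b ⟨hne, h⟩
    exact ⟨hne.symm, h.symm⟩
  loopless := by
    constructor
    rintro a ⟨hne, -⟩
    exact hne rfl

/-- A variety of (associative, not necessarily unital or commutative) rings: a class of
rings closed under isomorphisms, subrings, homomorphic images and arbitrary products. -/
structure RingVariety : Type 1 where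
  mem : ∀ (R : Type) [NonUnitalRing R], Prop
  closed_iso : ∀ (R S : Type) [NonUnitalRing R] [NonUnitalRing S],
    (R ≃+* S) → mem R → mem S
  closed_subring : ∀ (R : Type) [NonUnitalRing R] (S : NonUnitalSubring R),
    mem R → mem S
  closed_image : ∀ (R S : Type) [NonUnitalRing R] [NonUnitalRing S] (f : R →ₙ+* S),
    Function.Surjective f → mem R → mem S
  closed_prod : ∀ (ι : Type) (R : ι → Type) [∀ i, NonUnitalRing (R i)],
    (∀ i, mem (R i)) → mem (∀ i, R i)

/-- A variety is graph-determined if any two finite rings in it with isomorphic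
zero-divisor graphs are isomorphic. -/
def GraphDetermined (M : RingVariety) : Prop :=
  ∀ (R S : Type) [NonUnitalRing R] [NonUnitalRing S], Finite R → Finite S →
    M.mem R → M.mem S →
    Nonempty (zdvGraph R ≃g zdvGraph S) → Nonempty (R ≃+* S)

/-- The null ring on an abelian group `A`: all products are zero. -/
def NullRing (A : Type*) := A

instance {A : Type*} [AddCommGroup A] : NonUnitalRing (NullRing A) :=
  { (inferInstanceAs (AddCommGroup A) : AddCommGroup A) with
    mul := fun _ _ => (0 : A)
    left_distrib := fun _ _ _ => (add_zero (0 : A)).symm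
    right_distrib := fun _ _ _ => (add_zero (0 : A)).symm
    zero_mul := fun _ => rfl
    mul_zero := fun _ => rfl
    mul_assoc := fun _ _ _ => rfl }

/-!
Inside `𝔐`, the null ring `N_{0,pⁿ}` has the image `N_{0,p}`, hence also the product
`N_{0,p}ⁿ`. Both are null rings with `pⁿ` elements, so the zero-divisor graph of each is the
complete graph on its `pⁿ - 1` nonzero elements, and graph-determinedness makes them isomorphic
as rings. But `p` annihilates `N_{0,p}ⁿ` and not `N_{0,pⁿ}` when `n ≥ 2`.
-/

theorem Nat.card_subtype_ne {α : Type*} [Finite α] (a : α) :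
    Nat.card {x // x ≠ a} = Nat.card α - 1 := by
  classical
  have := Fintype.ofFinite α
  simp [Nat.card_eq_fintype_card, Fintype.card_subtype_compl]

theorem AddEquiv.nsmul_eq_zero {A B : Type*} [AddMonoid A] [AddMonoid B] (e : A ≃+ B) {k : ℕ}
    (h : ∀ b : B, k • b = 0) (a : A) : k • a = 0 :=
  e.injective (by rw [map_nsmul, h, map_zero])

theorem ZMod.natCast_ne_zero_of_one_lt_pow {p n : ℕ} (hp : 1 < p) (hn : 1 < n) :
    (p : ZMod (p ^ n)) ≠ 0 := by
  rw [Ne, ZMod.natCast_eq_zero_iff]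
  exact Nat.not_pos_pow_dvd hp hn

section ZeroMul

variable {R S : Type*} [NonUnitalNonAssocRing R] [NonUnitalNonAssocRing S]

theorem isZD_iff_ne_zero_of_mul_eq_zero (h : ∀ a b : R, a * b = 0) (x : R) :
    IsZD x ↔ x ≠ 0 :=
  ⟨And.left, fun hx => ⟨hx, x, hx, Or.inl (h x x)⟩⟩

theorem zdvGraph_eq_top_of_mul_eq_zero (h : ∀ a b : R, a * b = 0) : zdvGraph R = ⊤ := by
  ext a b
  exact and_iff_left (Or.inl (h a b))

theorem nonempty_zdvGraph_iso_of_mul_eq_zero [Finite R] [Finite S]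
    (hR : ∀ a b : R, a * b = 0) (hS : ∀ a b : S, a * b = 0) (hcard : Nat.card R = Nat.card S) :
    Nonempty (zdvGraph R ≃g zdvGraph S) := by
  have hnz : Nat.card {x : R // x ≠ 0} = Nat.card {y : S // y ≠ 0} := by
    rw [Nat.card_subtype_ne, Nat.card_subtype_ne, hcard]
  obtain ⟨e⟩ := Finite.card_eq.mp hnz
  rw [zdvGraph_eq_top_of_mul_eq_zero hR, zdvGraph_eq_top_of_mul_eq_zero hS]
  exact ⟨.completeGraph <| (Equiv.subtypeEquivRight (isZD_iff_ne_zero_of_mul_eq_zero hR)).trans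
    (e.trans (Equiv.subtypeEquivRight (isZD_iff_ne_zero_of_mul_eq_zero hS)).symm)⟩

end ZeroMul

namespace NullRing

instance {A : Type*} [Finite A] : Finite (NullRing A) := inferInstanceAs (Finite A)

theorem natCard_eq (A : Type*) : Nat.card (NullRing A) = Nat.card A := rfl

variable {A B : Type*} [AddCommGroup A] [AddCommGroup B]

theorem mul_def (a b : NullRing A) : a * b = 0 := rfl

def map (f : A →+ B) : NullRing A →ₙ+* NullRing B :=
  { f with map_mul' := fun _ _ => f.map_zero }

end NullRing

theorem RingVariety.mem_nullRing_of_surjective (M : RingVariety) {A B : Type} [AddCommGroup A]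
    [AddCommGroup B] (f : A →+ B) (hf : Function.Surjective f) (h : M.mem (NullRing A)) :
    M.mem (NullRing B) :=
  M.closed_image _ _ (NullRing.map f) hf h

/-- If `𝔐` is a graph-determined variety, then for every prime `p` and every `n ≥ 2`
the null ring on `ℤ/pⁿℤ` does not belong to `𝔐`. -/
theorem nullRing_pow_not_mem (M : RingVariety) (hgd : GraphDetermined M)
    (p : ℕ) (hp : p.Prime) (n : ℕ) (hn : 2 ≤ n) :
    ¬ M.mem (NullRing (ZMod (p ^ n))) := by
  intro hmem
  have : NeZero p := ⟨hp.ne_zero⟩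
  have : NeZero (p ^ n) := ⟨pow_ne_zero n hp.ne_zero⟩
  have hdvd : p ∣ p ^ n := dvd_pow_self p (by omega)
  have hmem_p : M.mem (NullRing (ZMod p)) :=
    M.mem_nullRing_of_surjective (ZMod.castHom hdvd (ZMod p)).toAddMonoidHom
      (ZMod.castHom_surjective hdvd) hmem
  have hmem_pi : M.mem (Fin n → NullRing (ZMod p)) := M.closed_prod _ _ fun _ => hmem_p
  have hcard : Nat.card (NullRing (ZMod (p ^ n))) = Nat.card (Fin n → NullRing (ZMod p)) := by
    simp [NullRing.natCard_eq, Nat.card_fun]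
  obtain ⟨e⟩ := hgd _ _ inferInstance inferInstance hmem hmem_pi
    (nonempty_zdvGraph_iso_of_mul_eq_zero NullRing.mul_def
      (fun a b => funext fun i => NullRing.mul_def (a i) (b i)) hcard)
  have hp_smul : ∀ y : Fin n → NullRing (ZMod p), p • y = 0 := fun y =>
    funext fun i => ZModModule.char_nsmul_eq_zero p (G := ZMod p) (y i)
  have hp_smul_one : p • (1 : ZMod (p ^ n)) = 0 := e.toAddEquiv.nsmul_eq_zero hp_smul _
  have hp_zero : (p : ZMod (p ^ n)) = 0 := by simpa using hp_smul_one
  exact ZMod.natCast_ne_zero_of_one_lt_pow hp.one_lt (by omega) hp_zero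
end

section
/- Let 𝔐 be a graph-determined variety of rings. Then for every odd prime q, the ring N_{q²} does not belong to 𝔐. -/
/-- The ring `N_{p²}`: the additive group `ℤ/p²ℤ` equipped with the multiplication
`x ∘ y = p·x·y`. -/
def Npsq (p : ℕ) := ZMod (p ^ 2)

namespace Npsq

/-- The identity map from `N_{p²}` to its underlying additive group `ℤ/p²ℤ`. -/
def zc {p : ℕ} (x : Npsq p) : ZMod (p ^ 2) := x

instance (p : ℕ) : NonUnitalRing (Npsq p) :=
  { (inferInstanceAs (AddCommGroup (ZMod (p ^ 2))) : AddCommGroup (ZMod (p ^ 2))) with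
    mul := fun a b => ((p : ZMod (p ^ 2)) * zc a * zc b : ZMod (p ^ 2))
    left_distrib := fun a b c => by
      show (p : ZMod (p ^ 2)) * zc a * (zc b + zc c)
          = (p : ZMod (p ^ 2)) * zc a * zc b + (p : ZMod (p ^ 2)) * zc a * zc c
      ring
    right_distrib := fun a b c => by
      show (p : ZMod (p ^ 2)) * (zc a + zc b) * zc c
          = (p : ZMod (p ^ 2)) * zc a * zc c + (p : ZMod (p ^ 2)) * zc b * zc c
      ring
    zero_mul := fun a => by
      show (p : ZMod (p ^ 2)) * (0 : ZMod (p ^ 2)) * zc a = (0 : ZMod (p ^ 2))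
      ring
    mul_zero := fun a => by
      show (p : ZMod (p ^ 2)) * zc a * (0 : ZMod (p ^ 2)) = (0 : ZMod (p ^ 2))
      ring
    mul_assoc := fun a b c => by
      show (p : ZMod (p ^ 2)) * ((p : ZMod (p ^ 2)) * zc a * zc b) * zc c
          = (p : ZMod (p ^ 2)) * zc a * ((p : ZMod (p ^ 2)) * zc b * zc c)
      ring }

end Npsq

/-!
In `N_{q²}` one has `x ∘ y = 0` iff `q ∣ x` or `q ∣ y`, and in `A = s𝔽_q[s]/(s³)` one has
`a b = 0` iff `s² ∣ a` or `s² ∣ b`; writing elements of `ℤ/q²ℤ` in base `q` therefore gives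
an isomorphism of zero-divisor graphs `Γ(N_{q²}) ≅ Γ(A)`. Moreover `A` lies in every variety
containing `N_{q²}`: the pairs `(a, b) ∈ N_{q²}²` with `q ∣ a + b` form a subring, and
`(a, b) ↦ (a mod q, (a + b) / 2q mod q)` maps it onto `A`; it is multiplicative because the
product of two such pairs has coordinate sum `q (a c + b d)` with `a c + b d ≡ 2 a c (mod q)`,
and dividing by `2` needs `q` odd. Finally `A` has characteristic `q` and `N_{q²}` does not,
so the two rings are not isomorphic.
-/

section Digits

variable {q : ℕ}

abbrev lowDigit (q : ℕ) : ZMod (q ^ 2) →+* ZMod q :=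
  ZMod.castHom (dvd_pow_self q two_ne_zero) (ZMod q)

def highDigit (q : ℕ) (z : ZMod (q ^ 2)) : ZMod q := (z.val / q : ℕ)

lemma lowDigit_apply [NeZero q] (z : ZMod (q ^ 2)) : lowDigit q z = z.val := by
  rw [ZMod.castHom_apply, ZMod.cast_eq_val]

lemma lowDigit_natCast_val [NeZero q] (x : ZMod q) : lowDigit q (x.val : ZMod (q ^ 2)) = x := by
  rw [map_natCast, ZMod.natCast_zmod_val]

lemma lowDigit_eq_zero_iff [NeZero q] (z : ZMod (q ^ 2)) :
    lowDigit q z = 0 ↔ ∃ t, z = (q : ZMod (q ^ 2)) * t := by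
  refine ⟨fun hz => ⟨(z.val / q : ℕ), ?_⟩, ?_⟩
  · rw [lowDigit_apply, ZMod.natCast_eq_zero_iff] at hz
    rw [← Nat.cast_mul, Nat.mul_div_cancel' hz, ZMod.natCast_zmod_val]
  · rintro ⟨t, rfl⟩
    rw [map_mul, map_natCast, ZMod.natCast_self, zero_mul]

lemma highDigit_natCast_mul (hq : 1 < q) (t : ZMod (q ^ 2)) :
    highDigit q ((q : ZMod (q ^ 2)) * t) = lowDigit q t := by
  have : NeZero q := ⟨by omega⟩
  have hval : ((q : ZMod (q ^ 2)) * t).val = q * (t.val % q) := by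
    rw [ZMod.val_mul, ZMod.val_natCast_of_lt (by nlinarith), ← Nat.mul_mod_mul_left, ← sq]
  rw [highDigit, hval, Nat.mul_div_cancel_left _ (by omega), ZMod.natCast_mod, lowDigit_apply]

lemma natCast_mul_eq_zero_iff (hq : 1 < q) (z : ZMod (q ^ 2)) :
    (q : ZMod (q ^ 2)) * z = 0 ↔ lowDigit q z = 0 := by
  have : NeZero q := ⟨by omega⟩
  refine ⟨fun h => ?_, fun h => ?_⟩
  · rw [← highDigit_natCast_mul hq, h, highDigit, ZMod.val_zero, Nat.zero_div, Nat.cast_zero]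
  · obtain ⟨t, rfl⟩ := (lowDigit_eq_zero_iff z).1 h
    rw [← mul_assoc, ← Nat.cast_mul, ← sq, ZMod.natCast_self, zero_mul]

lemma highDigit_add (hq : 1 < q) {z w : ZMod (q ^ 2)}
    (hz : lowDigit q z = 0) (hw : lowDigit q w = 0) :
    highDigit q (z + w) = highDigit q z + highDigit q w := by
  have : NeZero q := ⟨by omega⟩
  obtain ⟨t, rfl⟩ := (lowDigit_eq_zero_iff z).1 hz
  obtain ⟨s, rfl⟩ := (lowDigit_eq_zero_iff w).1 hw
  rw [← mul_add, highDigit_natCast_mul hq, highDigit_natCast_mul hq, highDigit_natCast_mul hq,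
    map_add]

def digitEquiv (hq : 1 < q) : ZMod (q ^ 2) ≃ ZMod q × ZMod q :=
  have : NeZero q := ⟨by omega⟩
  { toFun z := (lowDigit q z, highDigit q z)
    invFun d := ((d.1.val + q * d.2.val : ℕ) : ZMod (q ^ 2))
    left_inv z := by
      have hdiv : z.val / q < q := Nat.div_lt_of_lt_mul (sq q ▸ ZMod.val_lt z)
      simp only [lowDigit_apply, highDigit, ZMod.val_natCast, Nat.mod_eq_of_lt hdiv,
        Nat.mod_add_div, ZMod.natCast_zmod_val]
    right_inv := by
      rintro ⟨a, b⟩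
      have ha := ZMod.val_lt a
      have hlt : a.val + q * b.val < q ^ 2 := by nlinarith [ZMod.val_lt b]
      ext
      · change lowDigit q _ = a
        rw [map_natCast, Nat.cast_add, Nat.cast_mul, ZMod.natCast_self, zero_mul, add_zero,
          ZMod.natCast_zmod_val]
      · change highDigit q _ = b
        rw [highDigit, ZMod.val_natCast_of_lt hlt, Nat.add_mul_div_left _ _ (by omega),
          Nat.div_eq_of_lt ha, zero_add, ZMod.natCast_zmod_val] }

lemma digitEquiv_zero (hq : 1 < q) : digitEquiv hq 0 = 0 := by
  have : NeZero q := ⟨by omega⟩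
  ext <;> simp [digitEquiv, highDigit]

lemma ZMod.two_ne_zero_of_odd [Nontrivial (ZMod q)] (hodd : Odd q) : (2 : ZMod q) ≠ 0 := by
  rw [← one_add_one_eq_two, Ne, ZMod.add_self_eq_zero_iff_eq_zero hodd]
  exact one_ne_zero

end Digits

namespace Npsq

variable {q : ℕ}

instance [NeZero q] : Finite (Npsq q) := inferInstanceAs (Finite (ZMod (q ^ 2)))

@[simp] lemma zc_add (x y : Npsq q) : zc (x + y) = zc x + zc y := rfl

@[simp] lemma zc_zero : zc (0 : Npsq q) = 0 := rfl

@[simp] lemma zc_neg (x : Npsq q) : zc (-x) = -zc x := rfl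

@[simp] lemma zc_mul (x y : Npsq q) : zc (x * y) = (q : ZMod (q ^ 2)) * zc x * zc y := rfl

lemma zc_injective : Function.Injective (zc : Npsq q → ZMod (q ^ 2)) := fun _ _ h => h

lemma mul_eq_zero_iff [Fact q.Prime] (x y : Npsq q) :
    x * y = 0 ↔ lowDigit q (zc x) = 0 ∨ lowDigit q (zc y) = 0 := by
  rw [← zc_injective.eq_iff, zc_mul, zc_zero, mul_assoc,
    natCast_mul_eq_zero_iff (Fact.out : q.Prime).one_lt, map_mul, mul_eq_zero]

lemma exists_nsmul_ne_zero (hq : 1 < q) : ∃ x : Npsq q, q • x ≠ 0 := by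
  refine ⟨(1 : ZMod (q ^ 2)), fun h => ?_⟩
  have h' : ((q : ℕ) : ZMod (q ^ 2)) = 0 := by
    rw [← mul_one (q : ZMod (q ^ 2)), ← nsmul_eq_mul]
    exact congrArg zc h
  rw [ZMod.natCast_eq_zero_iff] at h'
  have := Nat.le_of_dvd (by omega) h'
  nlinarith

end Npsq

/-- The ring `s 𝔽_q[s] / (s³)`, the pair `(x, u)` standing for `x s + u s²`. -/
def NilCube (q : ℕ) := ZMod q × ZMod q

namespace NilCube

variable {q : ℕ}

instance : AddCommGroup (NilCube q) := inferInstanceAs (AddCommGroup (ZMod q × ZMod q))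

instance : Mul (NilCube q) := ⟨fun a b => ((0 : ZMod q), Prod.fst a * Prod.fst b)⟩

lemma mul_def (a b : NilCube q) : a * b = ((0 : ZMod q), Prod.fst a * Prod.fst b) := rfl

instance : NonUnitalRing (NilCube q) where
  left_distrib _ _ _ := Prod.ext (add_zero 0).symm (mul_add _ _ _)
  right_distrib _ _ _ := Prod.ext (add_zero 0).symm (add_mul _ _ _)
  zero_mul _ := Prod.ext rfl (zero_mul _)
  mul_zero _ := Prod.ext rfl (mul_zero _)
  mul_assoc _ _ _ := Prod.ext rfl ((zero_mul _).trans (mul_zero _).symm)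

instance [NeZero q] : Finite (NilCube q) := inferInstanceAs (Finite (ZMod q × ZMod q))

lemma mul_eq_zero_iff [Fact q.Prime] (a b : NilCube q) :
    a * b = 0 ↔ Prod.fst a = 0 ∨ Prod.fst b = 0 := by
  rw [mul_def, ← mul_eq_zero]
  exact ⟨fun h => congrArg Prod.snd h, fun h => Prod.ext rfl h⟩

lemma nsmul_eq_zero (a : NilCube q) : q • a = 0 := by
  have hprod : ∀ p : ZMod q × ZMod q, q • p = 0 := fun p => by ext <;> simp
  exact hprod a

end NilCube

section ZeroDivisorGraph

variable {R S : Type*} [NonUnitalNonAssocRing R] [NonUnitalNonAssocRing S]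

lemma isZD_equiv_iff (e : R ≃ S) (h0 : e 0 = 0) (hmul : ∀ x y, e x * e y = 0 ↔ x * y = 0)
    (x : R) : IsZD (e x) ↔ IsZD x := by
  have hne : ∀ y, e y ≠ 0 ↔ y ≠ 0 := fun y => by rw [← h0, e.injective.ne_iff]
  simp only [IsZD, e.surjective.exists, hne, hmul]

def zdvGraphIsoOfEquiv (e : R ≃ S) (h0 : e 0 = 0) (hmul : ∀ x y, e x * e y = 0 ↔ x * y = 0) :
    zdvGraph R ≃g zdvGraph S where
  toEquiv := e.subtypeEquiv fun x => (isZD_equiv_iff e h0 hmul x).symm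
  map_rel_iff' {a b} := by
    simp only [zdvGraph, Equiv.subtypeEquiv_apply, ne_eq, e.injective.eq_iff,
      hmul, Subtype.ext_iff]

end ZeroDivisorGraph

lemma zdvGraph_Npsq_iso_NilCube (q : ℕ) [Fact q.Prime] :
    Nonempty (zdvGraph (Npsq q) ≃g zdvGraph (NilCube q)) := by
  have hq := (Fact.out : q.Prime).one_lt
  refine ⟨zdvGraphIsoOfEquiv (digitEquiv hq) (digitEquiv_zero hq) fun x y => ?_⟩
  rw [NilCube.mul_eq_zero_iff, Npsq.mul_eq_zero_iff]
  rfl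

namespace Npsq

def sumDvdSubring (q : ℕ) : NonUnitalSubring (Bool → Npsq q) where
  carrier := {f | lowDigit q (zc (f true) + zc (f false)) = 0}
  zero_mem' := by simp
  add_mem' {f g} hf hg := by
    simp only [Set.mem_ofPred_eq, Pi.add_apply, zc_add] at *
    rw [add_add_add_comm, map_add, hf, hg, add_zero]
  neg_mem' {f} hf := by
    simp only [Set.mem_ofPred_eq, Pi.neg_apply, zc_neg] at *
    rw [← neg_add, map_neg, hf, neg_zero]
  mul_mem' _ _ := by simp

variable {q : ℕ} [Fact q.Prime]

lemma lowDigit_zc_false (f : sumDvdSubring q) :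
    lowDigit q (zc (f.1 false)) = -lowDigit q (zc (f.1 true)) :=
  eq_neg_of_add_eq_zero_right ((map_add _ _ _).symm.trans f.2)

noncomputable def toNilCubeFun (f : sumDvdSubring q) : NilCube q :=
  (lowDigit q (zc (f.1 true)), (2 : ZMod q)⁻¹ * highDigit q (zc (f.1 true) + zc (f.1 false)))

lemma toNilCubeFun_add (f g : sumDvdSubring q) :
    toNilCubeFun (f + g) = toNilCubeFun f + toNilCubeFun g := by
  refine Prod.ext (map_add _ _ _) ?_
  change _ * highDigit q (zc (f.1 true + g.1 true) + zc (f.1 false + g.1 false)) = _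
  rw [zc_add, zc_add, add_add_add_comm, highDigit_add (Fact.out : q.Prime).one_lt f.2 g.2, mul_add]
  rfl

lemma toNilCubeFun_mul (hodd : Odd q) (f g : sumDvdSubring q) :
    toNilCubeFun (f * g) = toNilCubeFun f * toNilCubeFun g := by
  refine Prod.ext ?_ ?_
  · change lowDigit q (zc (f.1 true * g.1 true)) = 0
    simp
  · change _ * highDigit q (zc (f.1 true * g.1 true) + zc (f.1 false * g.1 false)) = _ * _
    rw [zc_mul, zc_mul, mul_assoc, mul_assoc, ← mul_add,
      highDigit_natCast_mul (Fact.out : q.Prime).one_lt, map_add, map_mul, map_mul,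
      lowDigit_zc_false, lowDigit_zc_false, neg_mul_neg, ← two_mul,
      inv_mul_cancel_left₀ (ZMod.two_ne_zero_of_odd hodd)]
    rfl

noncomputable def toNilCube (hodd : Odd q) : sumDvdSubring q →ₙ+* NilCube q :=
  { AddMonoidHom.mk' toNilCubeFun toNilCubeFun_add with
    map_mul' := toNilCubeFun_mul hodd }

lemma toNilCube_surjective (hodd : Odd q) : Function.Surjective (toNilCube hodd) := by
  have hq := (Fact.out : q.Prime).one_lt
  rintro ⟨x, u⟩
  let lift (y : ZMod q) : ZMod (q ^ 2) := y.val
  let f : Bool → Npsq q := fun i =>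
    if i then lift x else -lift x + (q : ZMod (q ^ 2)) * lift (2 * u)
  have hsum : zc (f true) + zc (f false) = (q : ZMod (q ^ 2)) * lift (2 * u) :=
    add_neg_cancel_left _ _
  have hf : f ∈ sumDvdSubring q := by
    change lowDigit q (zc (f true) + zc (f false)) = 0
    rw [hsum, map_mul, map_natCast, ZMod.natCast_self, zero_mul]
  refine ⟨⟨f, hf⟩, Prod.ext (lowDigit_natCast_val x) ?_⟩
  change _ * highDigit q (zc (f true) + zc (f false)) = u
  rw [hsum, highDigit_natCast_mul hq, lowDigit_natCast_val,
    inv_mul_cancel_left₀ (ZMod.two_ne_zero_of_odd hodd)]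

end Npsq

/-- If `𝔐` is a graph-determined variety, then for every odd prime `q` the ring
`N_{q²}` does not belong to `𝔐`. -/
theorem Npsq_not_mem_graphDetermined (M : RingVariety) (hgd : GraphDetermined M)
    (q : ℕ) (hq : q.Prime) (hodd : Odd q) :
    ¬ M.mem (Npsq q) := by
  have : Fact q.Prime := ⟨hq⟩
  intro hN
  have hA : M.mem (NilCube q) :=
    M.closed_image _ _ (Npsq.toNilCube hodd) (Npsq.toNilCube_surjective hodd)
      (M.closed_subring _ _ (M.closed_prod Bool _ fun _ => hN))
  obtain ⟨e⟩ := hgd _ _ inferInstance inferInstance hN hA (zdvGraph_Npsq_iso_NilCube q)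
  obtain ⟨x, hx⟩ := Npsq.exists_nsmul_ne_zero hq.one_lt
  exact hx (e.injective (by rw [map_nsmul, NilCube.nsmul_eq_zero, map_zero]))
end
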